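/- Let F be an undirected forest on n ≥ 2 vertices with p connected components and k ≥ 2, and suppose F has no isolated vertices. If P is a branching k-path vertex cover of F, then |P| ≥ (n + k + p(2k−1)) / (2k). -/

import Mathlib

/-- A rooted directed forest on vertex type `V`, given by a parent map
(edges are oriented from parent to child, i.e. away from the roots),
with no directed cycles. A root is a vertex with no parent. -/
structure RDForest (V : Type) where
  parent : V → Option V
  acyclic : ∀ v : V, ¬ Relation.TransGen (fun a b => parent b = some a) v v

namespace RDForest

variable {V : Type}

/-- Out-degree of a vertex: its number of children. -/
noncomputable def outDeg (F : RDForest V) (v : V) : ℕ :=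
  Nat.card {w | F.parent w = some v}

/-- A leaf is a vertex of out-degree 0. -/
def IsLeaf (F : RDForest V) (v : V) : Prop := F.outDeg v = 0

/-- A branching vertex is a vertex of out-degree at least 2. -/
def IsBranching (F : RDForest V) (v : V) : Prop := 2 ≤ F.outDeg v

/-- `p 0, p 1, …, p (k-1)` is a directed path on `k` vertices
(each successive vertex is a child of the previous one). -/
def IsDPath (F : RDForest V) (k : ℕ) (p : ℕ → V) : Prop :=
  ∀ i, i + 1 < k → F.parent (p (i + 1)) = some (p i)

/-- A branching `k`-path vertex cover of a rooted directed forest: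
all leaves belong to `P`, and every directed path on `k` vertices contains
a branching vertex or a vertex of `P`. -/
def IsBPVC (F : RDForest V) (k : ℕ) (P : Set V) : Prop :=
  (∀ v, F.IsLeaf v → v ∈ P) ∧
  ∀ p : ℕ → V, F.IsDPath k p →
    (∃ i < k, F.IsBranching (p i)) ∨ (∃ i < k, p i ∈ P)

end RDForest

namespace SimpleGraph

variable {V : Type}

/-- Degree of a vertex in an undirected graph. -/
noncomputable def udeg (G : SimpleGraph V) (v : V) : ℕ := Nat.card {w | G.Adj v w}

/-- `p 0, …, p (k-1)` is a path on `k` vertices: consecutive vertices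
are adjacent and all `k` vertices are distinct. -/
def IsUPath (G : SimpleGraph V) (k : ℕ) (p : ℕ → V) : Prop :=
  (∀ i, i + 1 < k → G.Adj (p i) (p (i + 1))) ∧
  (∀ i j, i < k → j < k → p i = p j → i = j)

/-- A branching `k`-path vertex cover of an undirected graph: all vertices of
degree at most 1 belong to `P`, and every path on `k` vertices contains a vertex
of degree at least 3 (a branching vertex) or a vertex of `P`. -/
def IsBPVC (G : SimpleGraph V) (k : ℕ) (P : Set V) : Prop :=
  (∀ v, G.udeg v ≤ 1 → v ∈ P) ∧
  ∀ p : ℕ → V, G.IsUPath k p →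
    (∃ i < k, 3 ≤ G.udeg (p i)) ∨ (∃ i < k, p i ∈ P)

end SimpleGraph

/-!
Root every component of the forest at a leaf, so that the `p` roots lie in `P`. A vertex outside
`P` has degree at least 2 and hence a child, so descending from any vertex through children meets
`S = P ∪ B` (`B` the branching vertices) within `k` steps: every vertex is an ancestor at distance
`< k` of a vertex of `S`, at distance `0` when that vertex is a root, and `n ≤ k (|S| - p) + p`.
The degree sum `2 (n - p)` of the forest gives `|B| + 2p ≤ #leaves ≤ |P|`, so
`n + 3kp ≤ 2k|P| + p`, which implies the claim as `p ≥ 1`.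
-/

open Finset

theorem Function.iterate_iterate_eq_of_forall_lt {α : Type*} {f g : α → α} {x : α} {n : ℕ}
    (h : ∀ j < n, g (f (f^[j] x)) = f^[j] x) : g^[n] (f^[n] x) = x := by
  induction n with
  | zero => rfl
  | succ n ih =>
    rw [Function.iterate_succ_apply, Function.iterate_succ_apply', h n n.lt_succ_self,
      ih fun j hj => h j (by omega)]

namespace SimpleGraph

variable {V : Type} {G : SimpleGraph V}

theorem udeg_eq_degree (v : V) [Fintype (G.neighborSet v)] : G.udeg v = G.degree v := by
  rw [udeg, ← card_neighborSet_eq_degree, ← Nat.card_eq_fintype_card]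
  rfl

theorem Reachable.exists_adj_dist_add_one {u v : V} (h : G.Reachable u v) (hne : u ≠ v) :
    ∃ x, G.Adj v x ∧ G.dist u x + 1 = G.dist u v := by
  obtain ⟨p, -, hp⟩ := h.exists_path_of_dist
  have hnil : ¬p.Nil := fun hn => hne hn.eq
  have hadj := p.adj_penultimate hnil
  refine ⟨p.penultimate, hadj.symm, le_antisymm ?_ ?_⟩
  · calc G.dist u p.penultimate + 1 ≤ p.dropLast.length + 1 := by gcongr; exact dist_le _
      _ = G.dist u v := by rw [p.length_dropLast_add_one hnil, hp]
  · simpa [dist_eq_one_iff_adj.mpr hadj] using hadj.reachable.dist_triangle_right u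

theorem IsAcyclic.eq_of_adj_of_dist_add_one (hG : G.IsAcyclic) {u v x y : V}
    (hx : G.Adj x v) (hy : G.Adj y v) (hxd : G.dist u x + 1 = G.dist u v)
    (hyd : G.dist u y + 1 = G.dist u v) : x = y := by
  have shortest : ∀ {z} (hz : G.Adj z v), G.dist u z + 1 = G.dist u v →
      ∃ q : G.Walk u z, (q.concat hz).IsPath := by
    intro z hz hzd
    obtain ⟨q, -, hq⟩ := ((Reachable.of_dist_ne_zero (by omega : G.dist u v ≠ 0)).trans
      hz.symm.reachable).exists_path_of_dist
    exact ⟨q, Walk.isPath_of_length_eq_dist _ (by simp [hq, hzd])⟩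
  obtain ⟨p, hp⟩ := shortest hx hxd
  obtain ⟨q, hq⟩ := shortest hy hyd
  simpa using congrArg (fun r : G.Path u v => r.1.penultimate)
    ((hG.subsingleton_path u v).elim ⟨_, hp⟩ ⟨_, hq⟩)

theorem IsAcyclic.exists_degree_le_one [Fintype V] [DecidableRel G.Adj] (hG : G.IsAcyclic)
    (c : G.ConnectedComponent) : ∃ v, G.connectedComponentMk v = c ∧ G.degree v ≤ 1 := by
  classical
  obtain ⟨w, hw, hmax⟩ := (univ.filter (G.connectedComponentMk · = c)).exists_max_image
    (G.dist c.out) ⟨c.out, mem_filter.mpr ⟨mem_univ _, c.out_eq⟩⟩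
  simp only [mem_filter, mem_univ, true_and] at hw hmax
  have hreach : G.Reachable c.out w := ConnectedComponent.exact (c.out_eq.trans hw.symm)
  -- every neighbour of a farthest vertex is closer to `c.out`, and in a forest only one is
  have closer : ∀ z, G.Adj w z → G.dist c.out z + 1 = G.dist c.out w := by
    intro z hz
    have := hmax z (by rw [← hw]; exact (ConnectedComponent.sound hz.reachable).symm)
    have := hG.dist_eq_dist_add_one_of_adj_of_reachable c.out hz hreach
    omega
  refine ⟨w, hw, card_le_one.mpr fun x hx y hy => ?_⟩
  rw [mem_neighborFinset] at hx hy
  exact hG.eq_of_adj_of_dist_add_one hx.symm hy.symm (closer x hx) (closer y hy)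

section Rooted

/- `ρ c` is the root of the component `c`; `rootedParent` and `rootedChild` return `v` itself
when `v` has no parent (a root) or no child. -/
variable (ρ : G.ConnectedComponent → V)

noncomputable def rootedDepth (v : V) : ℕ := G.dist (ρ (G.connectedComponentMk v)) v

open Classical in
noncomputable def rootedParent (v : V) : V :=
  if h : ∃ x, G.Adj x v ∧ rootedDepth ρ x + 1 = rootedDepth ρ v then h.choose else v

open Classical in
noncomputable def rootedChild (v : V) : V :=
  if h : ∃ w, G.Adj v w ∧ rootedDepth ρ v + 1 = rootedDepth ρ w then h.choose else v

variable {ρ}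

theorem eq_of_adj_of_rootedDepth_add_one (hG : G.IsAcyclic) {v x y : V}
    (hx : G.Adj x v) (hy : G.Adj y v) (hxd : rootedDepth ρ x + 1 = rootedDepth ρ v)
    (hyd : rootedDepth ρ y + 1 = rootedDepth ρ v) : x = y := by
  unfold rootedDepth at hxd hyd
  rw [ConnectedComponent.sound hx.reachable] at hxd
  rw [ConnectedComponent.sound hy.reachable] at hyd
  exact hG.eq_of_adj_of_dist_add_one hx hy hxd hyd

theorem rootedParent_eq (hG : G.IsAcyclic) {v x : V} (hx : G.Adj x v)
    (hxd : rootedDepth ρ x + 1 = rootedDepth ρ v) : rootedParent ρ v = x := by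
  have h : ∃ x, G.Adj x v ∧ rootedDepth ρ x + 1 = rootedDepth ρ v := ⟨x, hx, hxd⟩
  rw [rootedParent, dif_pos h]
  exact eq_of_adj_of_rootedDepth_add_one hG h.choose_spec.1 hx h.choose_spec.2 hxd

theorem rootedParent_of_rootedDepth_eq_zero {v : V} (hv : rootedDepth ρ v = 0) :
    rootedParent ρ v = v :=
  dif_neg fun ⟨_, _, h⟩ => by omega

theorem rootedChild_spec {v : V} (h : ∃ w, G.Adj v w ∧ rootedDepth ρ v + 1 = rootedDepth ρ w) :
    G.Adj v (rootedChild ρ v) ∧ rootedDepth ρ v + 1 = rootedDepth ρ (rootedChild ρ v) := by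
  rw [rootedChild, dif_pos h]
  exact h.choose_spec

theorem isUPath_iterate_rootedChild {k : ℕ} {v : V}
    (h : ∀ i < k, ∃ w, G.Adj ((rootedChild ρ)^[i] v) w ∧
      rootedDepth ρ ((rootedChild ρ)^[i] v) + 1 = rootedDepth ρ w) :
    G.IsUPath k (fun i => (rootedChild ρ)^[i] v) := by
  have hstep : ∀ i < k, G.Adj ((rootedChild ρ)^[i] v) ((rootedChild ρ)^[i + 1] v) ∧
      rootedDepth ρ ((rootedChild ρ)^[i] v) + 1 = rootedDepth ρ ((rootedChild ρ)^[i + 1] v) :=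
    fun i hi => Function.iterate_succ_apply' .. ▸ rootedChild_spec (h i hi)
  have hdepth : ∀ i ≤ k, rootedDepth ρ ((rootedChild ρ)^[i] v) = rootedDepth ρ v + i := by
    intro i hi
    induction i with
    | zero => rfl
    | succ i ih => rw [← (hstep i (by omega)).2, ih (by omega)]; rfl
  refine ⟨fun i hi => (hstep i (by omega)).1, fun i j hi hj h => ?_⟩
  have hi' := hdepth i hi.le
  rw [show (rootedChild ρ)^[i] v = (rootedChild ρ)^[j] v from h, hdepth j hj.le] at hi'
  omega

variable (hρ : Function.LeftInverse G.connectedComponentMk ρ)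
include hρ

theorem reachable_root (v : V) : G.Reachable (ρ (G.connectedComponentMk v)) v :=
  ConnectedComponent.exact (hρ _)

theorem rootedDepth_eq_zero_iff {v : V} :
    rootedDepth ρ v = 0 ↔ ρ (G.connectedComponentMk v) = v :=
  (reachable_root hρ v).dist_eq_zero_iff

theorem rootedDepth_of_adj (hG : G.IsAcyclic) {v w : V} (h : G.Adj v w) :
    rootedDepth ρ v = rootedDepth ρ w + 1 ∨ rootedDepth ρ w = rootedDepth ρ v + 1 := by
  unfold rootedDepth
  rw [← ConnectedComponent.sound h.reachable]
  exact hG.dist_eq_dist_add_one_of_adj_of_reachable _ h (reachable_root hρ v)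

theorem exists_adj_rootedDepth_add_one {v : V} (hv : rootedDepth ρ v ≠ 0) :
    ∃ x, G.Adj x v ∧ rootedDepth ρ x + 1 = rootedDepth ρ v := by
  obtain ⟨x, hx, hxd⟩ := (reachable_root hρ v).exists_adj_dist_add_one
    (mt (rootedDepth_eq_zero_iff hρ).mpr hv)
  refine ⟨x, hx.symm, ?_⟩
  rwa [rootedDepth, ← ConnectedComponent.sound hx.reachable]

theorem card_rootedDepth_eq_zero [Fintype V] :
    #{v | rootedDepth ρ v = 0} = Nat.card G.ConnectedComponent := by
  classical
  rw [Nat.card_eq_fintype_card, ← card_univ, ← card_image_of_injective univ hρ.injective]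
  congr 1
  ext v
  simp only [mem_filter, mem_univ, true_and, mem_image, rootedDepth_eq_zero_iff hρ]
  exact ⟨fun h => ⟨_, h⟩, by rintro ⟨c, -, rfl⟩; rw [hρ c]⟩

variable [Fintype V] [DecidableRel G.Adj] (hG : G.IsAcyclic)
include hG

theorem degree_eq_card_parents_add_card_children (v : V) :
    G.degree v = #{x | G.Adj x v ∧ rootedDepth ρ x + 1 = rootedDepth ρ v} +
      #{w | G.Adj v w ∧ rootedDepth ρ v + 1 = rootedDepth ρ w} := by
  classical
  rw [← card_union_of_disjoint (disjoint_filter.mpr fun w _ h h' => by omega),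
    ← card_neighborFinset_eq_degree]
  congr 1
  ext w
  simp only [mem_neighborFinset, mem_union, mem_filter, mem_univ, true_and]
  refine ⟨fun h => ?_, by rintro (⟨h, -⟩ | ⟨h, -⟩) <;> [exact h.symm; exact h]⟩
  rcases rootedDepth_of_adj hρ hG h with h' | h'
  · exact .inl ⟨h.symm, h'.symm⟩
  · exact .inr ⟨h, h'.symm⟩

theorem card_parents (v : V) :
    #{x | G.Adj x v ∧ rootedDepth ρ x + 1 = rootedDepth ρ v} =
      if rootedDepth ρ v = 0 then 0 else 1 := by
  split_ifs with hv
  · exact card_eq_zero.mpr (filter_eq_empty_iff.mpr fun x _ h => by omega)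
  · obtain ⟨x, hx⟩ := exists_adj_rootedDepth_add_one hρ hv
    refine card_eq_one.mpr ⟨x, eq_singleton_iff_unique_mem.mpr ⟨by simpa using hx, ?_⟩⟩
    simp only [mem_filter, mem_univ, true_and]
    exact fun y hy => eq_of_adj_of_rootedDepth_add_one hG hy.1 hx.1 hy.2 hx.2

theorem sum_degree_eq_two_mul_card_rootedDepth_ne_zero :
    ∑ v, G.degree v = 2 * #{v | rootedDepth ρ v ≠ 0} := by
  have hchildren := sum_card_bipartiteAbove_eq_sum_card_bipartiteBelow (s := univ) (t := univ)
    (r := fun v w => G.Adj v w ∧ rootedDepth ρ v + 1 = rootedDepth ρ w)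
  simp only [bipartiteAbove, bipartiteBelow] at hchildren
  simp_rw [degree_eq_card_parents_add_card_children hρ hG, sum_add_distrib, hchildren,
    card_parents hρ hG, card_filter, ite_not]
  ring

theorem exists_child_of_two_le_degree {v : V} (hv : 2 ≤ G.degree v) :
    ∃ w, G.Adj v w ∧ rootedDepth ρ v + 1 = rootedDepth ρ w := by
  have hdeg := degree_eq_card_parents_add_card_children hρ hG v
  have hpar := card_parents hρ hG v
  obtain ⟨w, hw⟩ := card_pos.mp (show 0 < #{w | G.Adj v w ∧ rootedDepth ρ v + 1 = rootedDepth ρ w}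
    by split_ifs at hpar <;> omega)
  exact ⟨w, (mem_filter.mp hw).2⟩

theorem exists_iterate_rootedParent_eq {k : ℕ} {P : Set V} (hP : G.IsBPVC k P)
    (v : V) : ∃ s, (s ∈ P ∨ 3 ≤ G.degree s) ∧ ∃ i < k, (rootedParent ρ)^[i] s = v := by
  set c := rootedChild ρ
  have hchild : ∀ x, ¬(x ∈ P ∨ 3 ≤ G.degree x) →
      ∃ w, G.Adj x w ∧ rootedDepth ρ x + 1 = rootedDepth ρ w := by
    intro x hx
    refine exists_child_of_two_le_degree hρ hG ?_
    by_contra! h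
    exact hx (.inl (hP.1 x (by rw [udeg_eq_degree]; omega)))
  -- otherwise the first `k` descendants of `v` form a path avoiding `P` and branching vertices
  have hreach : ∃ i, i < k ∧ (c^[i] v ∈ P ∨ 3 ≤ G.degree (c^[i] v)) := by
    by_contra! hout
    have hpath := isUPath_iterate_rootedChild fun i hi => hchild _ (by simpa using hout i hi)
    obtain ⟨i, hi, hbr⟩ | ⟨i, hi, hmem⟩ := hP.2 _ hpath
    · rw [udeg_eq_degree] at hbr
      exact absurd hbr (hout i hi).2.not_ge
    · exact (hout i hi).1 hmem
  classical
  refine ⟨c^[Nat.find hreach] v, (Nat.find_spec hreach).2, _, (Nat.find_spec hreach).1, ?_⟩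
  refine Function.iterate_iterate_eq_of_forall_lt fun j hj => ?_
  have hj' : ¬(c^[j] v ∈ P ∨ 3 ≤ G.degree (c^[j] v)) :=
    fun h => Nat.find_min hreach hj ⟨by have := (Nat.find_spec hreach).1; omega, h⟩
  have := rootedChild_spec (hchild _ hj')
  exact rootedParent_eq hG this.1 this.2

theorem card_add_mul_le_of_isBPVC [DecidableEq V] (hleaf : ∀ c, G.degree (ρ c) ≤ 1) {k : ℕ}
    {P : Finset V} (hP : G.IsBPVC k ↑P) :
    Fintype.card V + k * Nat.card G.ConnectedComponent ≤
      k * #(P ∪ ({v | 3 ≤ G.degree v} : Finset V)) + Nat.card G.ConnectedComponent := by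
  set S := P ∪ ({v | 3 ≤ G.degree v} : Finset V)
  set R : Finset V := {v | rootedDepth ρ v = 0}
  have hRS : R ⊆ S := by
    intro v hv
    rw [mem_filter, rootedDepth_eq_zero_iff hρ] at hv
    refine mem_union_left _ (hP.1 v ?_)
    rw [udeg_eq_degree, ← hv.2]
    exact hleaf _
  -- a vertex `v` is the `i`-th ancestor of some `s ∈ S` with `i < k`, and `i = 0` if `s` is a root
  have hsurj : Set.SurjOn (fun x : V × ℕ => (rootedParent ρ)^[x.2] x.1)
      ↑((S \ R) ×ˢ range k ∪ R ×ˢ {0}) ↑(univ : Finset V) := by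
    intro v _
    obtain ⟨s, hs, i, hi, rfl⟩ := exists_iterate_rootedParent_eq hρ hG hP v
    have hsS : s ∈ S := by simpa [S] using hs
    by_cases hsR : s ∈ R
    · refine ⟨(s, 0), by simp [hsR], ?_⟩
      exact (Function.iterate_fixed
        (rootedParent_of_rootedDepth_eq_zero (mem_filter.mp hsR).2) i).symm
    · exact ⟨(s, i), by simp [hsS, hsR, hi], rfl⟩
  have hcard := (card_le_card_of_surjOn _ hsurj).trans (card_union_le _ _)
  rw [card_univ, card_product, card_product, card_sdiff_of_subset hRS, card_range,
    card_singleton, card_rootedDepth_eq_zero hρ] at hcard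
  obtain ⟨m, hm⟩ := Nat.exists_eq_add_of_le (card_rootedDepth_eq_zero hρ ▸ card_le_card hRS)
  rw [hm, Nat.add_sub_cancel_left] at hcard
  rw [hm]
  nlinarith

end Rooted

theorem IsAcyclic.sum_degree_add_two_mul_card_connectedComponent [Fintype V] [DecidableRel G.Adj]
    (hG : G.IsAcyclic) :
    ∑ v, G.degree v + 2 * Nat.card G.ConnectedComponent = 2 * Fintype.card V := by
  classical
  obtain ⟨ρ, hρ⟩ : ∃ ρ : G.ConnectedComponent → V,
    Function.LeftInverse G.connectedComponentMk ρ := ⟨_, fun c => c.out_eq⟩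
  rw [sum_degree_eq_two_mul_card_rootedDepth_ne_zero hρ hG, ← card_rootedDepth_eq_zero hρ,
    ← mul_add, add_comm, card_filter_add_card_filter_not, card_univ]

theorem IsAcyclic.card_branching_add_two_mul_card_connectedComponent_le [Fintype V]
    [DecidableRel G.Adj] (hG : G.IsAcyclic) (hdeg : ∀ v, 1 ≤ G.degree v) :
    #{v | 3 ≤ G.degree v} + 2 * Nat.card G.ConnectedComponent ≤ #{v | G.degree v ≤ 1} := by
  have hpoint : ∀ v ∈ univ, 2 + (if 3 ≤ G.degree v then 1 else 0) ≤
      G.degree v + (if G.degree v ≤ 1 then 1 else 0) := by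
    intro v _
    have := hdeg v
    split_ifs <;> omega
  have hsum := sum_le_sum hpoint
  rw [sum_add_distrib, sum_add_distrib, ← card_filter, ← card_filter, sum_const, card_univ,
    smul_eq_mul] at hsum
  have := hG.sum_degree_add_two_mul_card_connectedComponent
  omega

theorem IsAcyclic.card_add_three_mul_le_of_isBPVC [Fintype V] [DecidableRel G.Adj]
    (hG : G.IsAcyclic) (hdeg : ∀ v, 1 ≤ G.degree v) {k : ℕ} {P : Finset V}
    (hP : G.IsBPVC k ↑P) :
    Fintype.card V + 3 * k * Nat.card G.ConnectedComponent ≤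
      2 * k * #P + Nat.card G.ConnectedComponent := by
  classical
  choose ρ hρ hleaf using hG.exists_degree_le_one
  have hcover := card_add_mul_le_of_isBPVC hρ hG hleaf hP
  have hleaves := hG.card_branching_add_two_mul_card_connectedComponent_le hdeg
  have hLP : #{v | G.degree v ≤ 1} ≤ #P :=
    card_le_card fun v hv => hP.1 v (by simpa [udeg_eq_degree] using hv)
  have hSP := card_union_le P {v | 3 ≤ G.degree v}
  have hkS := Nat.mul_le_mul_left k (show #(P ∪ ({v | 3 ≤ G.degree v} : Finset V)) +
    2 * Nat.card G.ConnectedComponent ≤ 2 * #P by omega)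
  nlinarith

end SimpleGraph

open SimpleGraph in
/-- Refined undirected lower bound: if an undirected forest on `n ≥ 2` vertices has
`p` connected components and no isolated vertices, then every branching `k`-path
vertex cover has at least `(n + k + p(2k-1))/(2k)` vertices. -/
theorem stmt15 {V : Type} [Fintype V] (G : SimpleGraph V) (hG : G.IsAcyclic)
    (k : ℕ) (hk : 2 ≤ k) (hn : 2 ≤ Nat.card V)
    (p : ℕ) (hp : p = Nat.card G.ConnectedComponent)
    (hiso : ∀ v : V, 1 ≤ G.udeg v)
    (P : Set V) (hP : G.IsBPVC k P) :
    ((Nat.card V : ℚ) + k + p * (2 * k - 1)) / (2 * k) ≤ P.ncard := by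
  classical
  lift P to Finset V using P.toFinite
  have hbound := hG.card_add_three_mul_le_of_isBPVC (fun v => udeg_eq_degree (G := G) v ▸ hiso v) hP
  rw [← hp] at hbound
  have hp1 : 1 ≤ p := by
    have : Nonempty V := (Nat.card_pos_iff.mp (by omega)).1
    exact hp ▸ Nat.card_pos
  have hkp : (k : ℚ) ≤ k * p := le_mul_of_one_le_right (by positivity) (by exact_mod_cast hp1)
  have hbound' := (Nat.cast_le (α := ℚ)).mpr hbound
  push_cast at hbound'
  rw [Set.ncard_coe_finset, Nat.card_eq_fintype_card, div_le_iff₀ (by positivity)]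
  linarith
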